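/- arXiv:1303.4785 — 2 statements merged into one kernel-verified Lean document; each statement's English description precedes it below -/
import Mathlib

section
/- Einstein addition obeys the left gyroassociative law: for all u, v, w in the c-ball V_c, u ⊕ (v ⊕ w) = (u ⊕ v) ⊕ gyr[u,v]w. -/
open scoped RealInnerProductSpace

noncomputable def gamma {V : Type*} [NormedAddCommGroup V] [InnerProductSpace ℝ V]
    (c : ℝ) (u : V) : ℝ :=
  1 / Real.sqrt (1 - ‖u‖ ^ 2 / c ^ 2)

noncomputable def eAdd {V : Type*} [NormedAddCommGroup V] [InnerProductSpace ℝ V]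
    (c : ℝ) (u v : V) : V :=
  (1 / (1 + ⟪u, v⟫ / c ^ 2)) •
    (u + (1 / gamma c u) • v +
      ((1 / c ^ 2) * (gamma c u / (1 + gamma c u)) * ⟪u, v⟫) • u)

noncomputable def eGyr {V : Type*} [NormedAddCommGroup V] [InnerProductSpace ℝ V]
    (c : ℝ) (u v w : V) : V :=
  eAdd c (-(eAdd c u v)) (eAdd c u (eAdd c v w))

noncomputable def eCoadd {V : Type*} [NormedAddCommGroup V] [InnerProductSpace ℝ V]
    (c : ℝ) (u v : V) : V :=
  eAdd c u (eGyr c u (-v) v)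

noncomputable def mAdd {V : Type*} [NormedAddCommGroup V] [InnerProductSpace ℝ V]
    (s : ℝ) (u v : V) : V :=
  (1 / (1 + (2 / s ^ 2) * ⟪u, v⟫ + (1 / s ^ 4) * ‖u‖ ^ 2 * ‖v‖ ^ 2)) •
    ((1 + (2 / s ^ 2) * ⟪u, v⟫ + (1 / s ^ 2) * ‖v‖ ^ 2) • u +
      (1 - (1 / s ^ 2) * ‖u‖ ^ 2) • v)

noncomputable def mGyr {V : Type*} [NormedAddCommGroup V] [InnerProductSpace ℝ V]
    (s : ℝ) (u v w : V) : V :=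
  mAdd s (-(mAdd s u v)) (mAdd s u (mAdd s v w))

noncomputable def mCoadd {V : Type*} [NormedAddCommGroup V] [InnerProductSpace ℝ V]
    (s : ℝ) (u v : V) : V :=
  mAdd s u (mGyr s u (-v) v)

noncomputable def artanh (x : ℝ) : ℝ :=
  (1 / 2) * Real.log ((1 + x) / (1 - x))

open Classical in
noncomputable def sMul {V : Type*} [NormedAddCommGroup V] [InnerProductSpace ℝ V]
    (c : ℝ) (r : ℝ) (v : V) : V :=
  if v = 0 then 0 else (c * Real.tanh (r * artanh (‖v‖ / c)) / ‖v‖) • v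

variable {V : Type*} [NormedAddCommGroup V] [InnerProductSpace ℝ V]

/-!
The gyration is defined so that the law is an instance of left cancellation,
`a ⊕ (⊖a ⊕ b) = b`, with `a = u ⊕ v` and `b = u ⊕ (v ⊕ w)`; it only remains to know that
the ball is closed under `⊕`. Closure follows from the norm formula `norm_eAdd_sq`, which is
the gamma identity `γ_{u⊕v} = γ_u γ_v (1 + ⟪u, v⟫ / c²)`. Left cancellation is a computation in
the plane spanned by `a` and `b`: `⊖a ⊕ b = α a + β b`, and the one non-obvious scalar is
`1 + ⟪a, ⊖a ⊕ b⟫ / c² = 1 / (γ_a² (1 - ⟪a, b⟫ / c²))`.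
-/

lemma one_sub_sq_div_sq_pos {x c : ℝ} (hx₀ : 0 ≤ x) (hx : x < c) : 0 < 1 - x ^ 2 / c ^ 2 := by
  rw [sub_pos, div_lt_one (by nlinarith)]
  exact pow_lt_pow_left₀ hx hx₀ two_ne_zero

section Einstein

variable {c : ℝ} {u v a b : V}

lemma gamma_neg (c : ℝ) (u : V) : gamma c (-u) = gamma c u := by simp [gamma]

lemma gamma_pos (hu : ‖u‖ < c) : 0 < gamma c u :=
  one_div_pos.2 (Real.sqrt_pos.2 (one_sub_sq_div_sq_pos (norm_nonneg u) hu))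

lemma norm_sq_eq_sub_div_gamma_sq (hu : ‖u‖ < c) :
    ‖u‖ ^ 2 = c ^ 2 - c ^ 2 / gamma c u ^ 2 := by
  have hc : 0 < c := (norm_nonneg u).trans_lt hu
  rw [gamma, div_pow, Real.sq_sqrt (one_sub_sq_div_sq_pos (norm_nonneg u) hu).le]
  field_simp
  ring

lemma abs_inner_lt_sq (hu : ‖u‖ < c) (hv : ‖v‖ < c) : |⟪u, v⟫| < c ^ 2 :=
  (abs_real_inner_le_norm u v).trans_lt
    (by nlinarith [norm_nonneg u, norm_nonneg v])

lemma eAdd_eq_smul_add_smul (c : ℝ) (u v : V) :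
    eAdd c u v = (1 / (1 + ⟪u, v⟫ / c ^ 2)) •
      ((1 + (1 / c ^ 2) * (gamma c u / (1 + gamma c u)) * ⟪u, v⟫) • u
        + (1 / gamma c u) • v) := by
  simp only [eAdd]
  module

lemma norm_eAdd_sq (hu : ‖u‖ < c) (hv : ‖v‖ < c) :
    ‖eAdd c u v‖ ^ 2 =
      c ^ 2 - c ^ 2 * (c ^ 2 - ‖u‖ ^ 2) * (c ^ 2 - ‖v‖ ^ 2) / (c ^ 2 + ⟪u, v⟫) ^ 2 := by
  have hc : 0 < c := (norm_nonneg u).trans_lt hu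
  have hγ := gamma_pos hu
  have hP : c ^ 2 + ⟪u, v⟫ ≠ 0 := by linarith [(abs_lt.1 (abs_inner_lt_sq hu hv)).1]
  rw [eAdd_eq_smul_add_smul, norm_smul, mul_pow, norm_add_sq_real, norm_smul, norm_smul,
    real_inner_smul_left, real_inner_smul_right]
  simp only [Real.norm_eq_abs, mul_pow, sq_abs]
  rw [norm_sq_eq_sub_div_gamma_sq hu]
  field_simp
  ring

lemma norm_eAdd_lt (hu : ‖u‖ < c) (hv : ‖v‖ < c) : ‖eAdd c u v‖ < c := by
  have hc : 0 < c := (norm_nonneg u).trans_lt hu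
  have hP : c ^ 2 + ⟪u, v⟫ ≠ 0 := by linarith [(abs_lt.1 (abs_inner_lt_sq hu hv)).1]
  have hu' : 0 < c ^ 2 - ‖u‖ ^ 2 := by nlinarith [norm_nonneg u]
  have hv' : 0 < c ^ 2 - ‖v‖ ^ 2 := by nlinarith [norm_nonneg v]
  refine lt_of_pow_lt_pow_left₀ 2 hc.le ?_
  rw [norm_eAdd_sq hu hv, sub_lt_self_iff]
  positivity

lemma eAdd_neg_cancel_left (ha : ‖a‖ < c) (hb : ‖b‖ < c) :
    eAdd c a (eAdd c (-a) b) = b := by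
  have hc : 0 < c := (norm_nonneg a).trans_lt ha
  have hP : c ^ 2 - ⟪a, b⟫ ≠ 0 := by linarith [(abs_lt.1 (abs_inner_lt_sq ha hb)).2]
  obtain ⟨γ, hγ, hγa⟩ : ∃ γ, 0 < γ ∧ gamma c a = γ := ⟨_, gamma_pos ha, rfl⟩
  set α := (1 / (1 - ⟪a, b⟫ / c ^ 2)) * (-1 + (1 / c ^ 2) * (γ / (1 + γ)) * ⟪a, b⟫)
  set β := (1 / (1 - ⟪a, b⟫ / c ^ 2)) * (1 / γ)
  have hx : eAdd c (-a) b = α • a + β • b := by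
    rw [eAdd_eq_smul_add_smul, inner_neg_left, gamma_neg, hγa]
    module
  have hax : ⟪a, α • a + β • b⟫ = α * (c ^ 2 - c ^ 2 / γ ^ 2) + β * ⟪a, b⟫ := by
    rw [inner_add_right, real_inner_smul_right, real_inner_smul_right,
      real_inner_self_eq_norm_sq, norm_sq_eq_sub_div_gamma_sq ha, hγa]
  have hD : 1 + (α * (c ^ 2 - c ^ 2 / γ ^ 2) + β * ⟪a, b⟫) / c ^ 2
      = c ^ 2 / (γ ^ 2 * (c ^ 2 - ⟪a, b⟫)) := by
    simp only [α, β]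
    field_simp
    ring
  rw [hx, eAdd_eq_smul_add_smul, hax, hγa, hD, one_div_div]
  match_scalars
  · simp only [α, β]; field_simp; ring
  · simp only [β]; field_simp

end Einstein

theorem einstein_left_gyroassociative_general (c : ℝ) (u v w : V)
    (hu : ‖u‖ < c) (hv : ‖v‖ < c) (hw : ‖w‖ < c) :
    eAdd c u (eAdd c v w) = eAdd c (eAdd c u v) (eGyr c u v w) :=
  (eAdd_neg_cancel_left (norm_eAdd_lt hu hv) (norm_eAdd_lt hu (norm_eAdd_lt hv hw))).symm

theorem einstein_left_gyroassociative (c : ℝ) (hc : 0 < c) (u v w : V)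
    (hu : ‖u‖ < c) (hv : ‖v‖ < c) (hw : ‖w‖ < c) :
    eAdd c u (eAdd c v w) = eAdd c (eAdd c u v) (eGyr c u v w) :=
  einstein_left_gyroassociative_general c u v w hu hv hw
end

section
/- Möbius coaddition admits the explicit representation u ⊞_M v = (γ_u²·u + γ_v²·v)/(γ_u² + γ_v² − 1) for all u, v in the s-ball V_s; in particular, Möbius coaddition is commutative. -/
open scoped RealInnerProductSpace

variable {V : Type*} [NormedAddCommGroup V] [InnerProductSpace ℝ V]

/-!
Clearing denominators, `x ⊕ y = D(x,y)⁻¹ • (s²(s² + 2⟪x,y⟫ + ‖y‖²) x + s²(s² - ‖x‖²) y)` with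
`D(x,y) = s⁴ + 2⟪x,y⟫s² + ‖x‖²‖y‖²`, so every point met in computing `u ⊞ v` lies in the span of
`u` and `v`, and the computation only involves `‖u‖²`, `‖v‖²`, `⟪u,v⟫`. Left cancellation
`⊖v ⊕ v = 0` reduces the gyration to `gyr[u,⊖v]v = ⊖(u ⊖ v) ⊕ u`; the two remaining Möbius
additions have denominators `s⁴(s² - ‖u‖²)²/D(u,-v)` and `(s⁴ - ‖u‖²‖v‖²)²/D(u,-v)`, and the
result is `u ⊞ v = s²((s² - ‖v‖²) u + (s² - ‖u‖²) v)/(s⁴ - ‖u‖²‖v‖²)`, which is symmetric in `u`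
and `v` and becomes the stated formula through `γ_w² = s²/(s² - ‖w‖²)`.
-/

lemma norm_smul_add_smul_sq (p q : ℝ) (u v : V) :
    ‖p • u + q • v‖ ^ 2 = p ^ 2 * ‖u‖ ^ 2 + 2 * p * q * ⟪u, v⟫ + q ^ 2 * ‖v‖ ^ 2 := by
  rw [norm_add_sq_real, norm_smul, norm_smul, real_inner_smul_left, real_inner_smul_right,
    mul_pow, mul_pow, Real.norm_eq_abs, Real.norm_eq_abs, sq_abs, sq_abs]
  ring

lemma inner_smul_add_smul_left (p q : ℝ) (u v : V) :
    ⟪p • u + q • v, u⟫ = p * ‖u‖ ^ 2 + q * ⟪u, v⟫ := by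
  simp only [inner_add_left, real_inner_smul_left, real_inner_self_eq_norm_sq, real_inner_comm u v]

lemma inner_smul_add_smul_right (p q : ℝ) (u v : V) :
    ⟪u, p • u + q • v⟫ = p * ‖u‖ ^ 2 + q * ⟪u, v⟫ := by
  simp only [inner_add_right, real_inner_smul_right, real_inner_self_eq_norm_sq]

lemma norm_sq_lt_sq {E : Type*} [SeminormedAddCommGroup E] {s : ℝ} {u : E} (hu : ‖u‖ < s) :
    ‖u‖ ^ 2 < s ^ 2 :=
  pow_lt_pow_left₀ hu (norm_nonneg u) two_ne_zero

lemma norm_sq_mul_norm_sq_lt {E : Type*} [SeminormedAddCommGroup E] {s : ℝ} {u v : E}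
    (hu : ‖u‖ < s) (hv : ‖v‖ < s) :
    ‖u‖ ^ 2 * ‖v‖ ^ 2 < s ^ 4 := by
  rw [show s ^ 4 = s ^ 2 * s ^ 2 by ring]
  exact mul_lt_mul'' (norm_sq_lt_sq hu) (norm_sq_lt_sq hv) (by positivity) (by positivity)

noncomputable def mAddDenom (s : ℝ) (x y : V) : ℝ :=
  s ^ 4 + 2 * ⟪x, y⟫ * s ^ 2 + ‖x‖ ^ 2 * ‖y‖ ^ 2

-- `mAddDenom s x y ≥ (s² - ‖x‖‖y‖)²` by Cauchy–Schwarz.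
lemma mAddDenom_pos {s : ℝ} {x y : V} (hx : ‖x‖ < s) (hy : ‖y‖ < s) :
    0 < mAddDenom s x y := by
  have hxy : ‖x‖ * ‖y‖ < s ^ 2 := by nlinarith [norm_nonneg x, norm_nonneg y]
  rw [mAddDenom]
  nlinarith [neg_le_of_abs_le (abs_real_inner_le_norm x y), sq_nonneg (s ^ 2 - ‖x‖ * ‖y‖)]

lemma mAddDenom_neg_right (s : ℝ) (u v : V) :
    mAddDenom s u (-v) = s ^ 4 - 2 * ⟪u, v⟫ * s ^ 2 + ‖u‖ ^ 2 * ‖v‖ ^ 2 := by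
  rw [mAddDenom, inner_neg_right, norm_neg]; ring

lemma mAdd_eq_smul {s : ℝ} (hs : s ≠ 0) (x y : V) :
    mAdd s x y = (mAddDenom s x y)⁻¹ •
      ((s ^ 2 * (s ^ 2 + 2 * ⟪x, y⟫ + ‖y‖ ^ 2)) • x + (s ^ 2 * (s ^ 2 - ‖x‖ ^ 2)) • y) := by
  have h : 1 + (2 / s ^ 2) * ⟪x, y⟫ + (1 / s ^ 4) * ‖x‖ ^ 2 * ‖y‖ ^ 2
      = mAddDenom s x y / s ^ 4 := by
    rw [mAddDenom]; field_simp
  rw [mAdd, h, one_div_div]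
  match_scalars <;> field_simp

lemma mAdd_zero_right (s : ℝ) (u : V) : mAdd s u 0 = u := by
  simp [mAdd]

lemma mAdd_neg_left_self (s : ℝ) (v : V) : mAdd s (-v) v = 0 := by
  rw [mAdd]
  simp only [inner_neg_left, norm_neg, real_inner_self_eq_norm_sq]
  match_scalars
  ring

lemma mGyr_neg_self_eq_mAdd (s : ℝ) (u v : V) :
    mGyr s u (-v) v = mAdd s (-(mAdd s u (-v))) u := by
  rw [mGyr, mAdd_neg_left_self, mAdd_zero_right]

lemma mGyr_neg_self_eq {s : ℝ} {u v : V} (hu : ‖u‖ < s) (hv : ‖v‖ < s) :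
    mGyr s u (-v) v = (mAddDenom s u (-v))⁻¹ •
      ((s ^ 4 - ‖u‖ ^ 2 * ‖v‖ ^ 2) • v - (2 * ‖v‖ ^ 2 * (s ^ 2 - ⟪u, v⟫)) • u) := by
  have hs : s ≠ 0 := (lt_of_le_of_lt (norm_nonneg u) hu).ne'
  have hD : mAddDenom s u (-v) ≠ 0 := (mAddDenom_pos hu (by rwa [norm_neg])).ne'
  have hu' : s ^ 2 - ‖u‖ ^ 2 ≠ 0 := (sub_pos.2 (norm_sq_lt_sq hu)).ne'
  have hw : mAdd s u (-v) =
      ((mAddDenom s u (-v))⁻¹ * (s ^ 2 * (s ^ 2 - 2 * ⟪u, v⟫ + ‖v‖ ^ 2))) • u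
      + (-((mAddDenom s u (-v))⁻¹ * (s ^ 2 * (s ^ 2 - ‖u‖ ^ 2)))) • v := by
    rw [mAdd_eq_smul hs, inner_neg_right, norm_neg]
    match_scalars <;> ring
  have hD' : mAddDenom s (-(mAdd s u (-v))) u =
      s ^ 4 * (s ^ 2 - ‖u‖ ^ 2) ^ 2 / mAddDenom s u (-v) := by
    rw [mAddDenom, inner_neg_left, norm_neg, hw, inner_smul_add_smul_left, norm_smul_add_smul_sq]
    field_simp
    rw [mAddDenom_neg_right]
    ring
  rw [mGyr_neg_self_eq_mAdd, mAdd_eq_smul hs, hD', inner_neg_left, norm_neg, hw,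
    inner_smul_add_smul_left, norm_smul_add_smul_sq]
  match_scalars <;> (field_simp; rw [mAddDenom_neg_right]; ring)

lemma mCoadd_eq {s : ℝ} {u v : V} (hu : ‖u‖ < s) (hv : ‖v‖ < s) :
    mCoadd s u v = (s ^ 4 - ‖u‖ ^ 2 * ‖v‖ ^ 2)⁻¹ •
      ((s ^ 2 * (s ^ 2 - ‖v‖ ^ 2)) • u + (s ^ 2 * (s ^ 2 - ‖u‖ ^ 2)) • v) := by
  have hs : s ≠ 0 := (lt_of_le_of_lt (norm_nonneg u) hu).ne'
  have hD : mAddDenom s u (-v) ≠ 0 := (mAddDenom_pos hu (by rwa [norm_neg])).ne'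
  have huv : s ^ 4 - ‖u‖ ^ 2 * ‖v‖ ^ 2 ≠ 0 := (sub_pos.2 (norm_sq_mul_norm_sq_lt hu hv)).ne'
  have hg : mGyr s u (-v) v =
      (-((mAddDenom s u (-v))⁻¹ * (2 * ‖v‖ ^ 2 * (s ^ 2 - ⟪u, v⟫)))) • u
      + ((mAddDenom s u (-v))⁻¹ * (s ^ 4 - ‖u‖ ^ 2 * ‖v‖ ^ 2)) • v := by
    rw [mGyr_neg_self_eq hu hv]; module
  have hD' : mAddDenom s u (mGyr s u (-v) v) =
      (s ^ 4 - ‖u‖ ^ 2 * ‖v‖ ^ 2) ^ 2 / mAddDenom s u (-v) := by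
    rw [mAddDenom, hg, inner_smul_add_smul_right, norm_smul_add_smul_sq]
    field_simp
    rw [mAddDenom_neg_right]
    ring
  rw [mCoadd, mAdd_eq_smul hs, hD', hg, inner_smul_add_smul_right, norm_smul_add_smul_sq]
  match_scalars
  · field_simp
    rw [mAddDenom_neg_right]
    ring
  · field_simp

lemma mCoadd_comm {s : ℝ} {u v : V} (hu : ‖u‖ < s) (hv : ‖v‖ < s) :
    mCoadd s u v = mCoadd s v u := by
  rw [mCoadd_eq hu hv, mCoadd_eq hv hu, mul_comm (‖v‖ ^ 2), add_comm]

lemma gamma_sq {s : ℝ} {w : V} (hw : ‖w‖ < s) : gamma s w ^ 2 = s ^ 2 / (s ^ 2 - ‖w‖ ^ 2) := by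
  have hs : s ≠ 0 := (lt_of_le_of_lt (norm_nonneg w) hw).ne'
  have hw' : ‖w‖ ^ 2 / s ^ 2 ≤ 1 := (div_le_one (by positivity)).2 (norm_sq_lt_sq hw).le
  rw [gamma, div_pow, one_pow, Real.sq_sqrt (sub_nonneg.2 hw'),
    one_sub_div (pow_ne_zero 2 hs), one_div_div]

theorem mobius_coaddition_formula_general (s : ℝ) (u v : V)
    (hu : ‖u‖ < s) (hv : ‖v‖ < s) :
    mCoadd s u v =
      (1 / (gamma s u ^ 2 + gamma s v ^ 2 - 1)) •
        (gamma s u ^ 2 • u + gamma s v ^ 2 • v) ∧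
    mCoadd s u v = mCoadd s v u := by
  refine ⟨?_, mCoadd_comm hu hv⟩
  have hu' : s ^ 2 - ‖u‖ ^ 2 ≠ 0 := (sub_pos.2 (norm_sq_lt_sq hu)).ne'
  have hv' : s ^ 2 - ‖v‖ ^ 2 ≠ 0 := (sub_pos.2 (norm_sq_lt_sq hv)).ne'
  have huv : s ^ 4 - ‖u‖ ^ 2 * ‖v‖ ^ 2 ≠ 0 := (sub_pos.2 (norm_sq_mul_norm_sq_lt hu hv)).ne'
  have hsum : s ^ 2 / (s ^ 2 - ‖u‖ ^ 2) + s ^ 2 / (s ^ 2 - ‖v‖ ^ 2) - 1 =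
      (s ^ 4 - ‖u‖ ^ 2 * ‖v‖ ^ 2) / ((s ^ 2 - ‖u‖ ^ 2) * (s ^ 2 - ‖v‖ ^ 2)) := by
    field_simp; ring
  rw [mCoadd_eq hu hv, gamma_sq hu, gamma_sq hv, hsum]
  match_scalars <;> field_simp

theorem mobius_coaddition_formula (s : ℝ) (hs : 0 < s) (u v : V)
    (hu : ‖u‖ < s) (hv : ‖v‖ < s) :
    mCoadd s u v =
      (1 / (gamma s u ^ 2 + gamma s v ^ 2 - 1)) •
        (gamma s u ^ 2 • u + gamma s v ^ 2 • v) ∧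
    mCoadd s u v = mCoadd s v u :=
  mobius_coaddition_formula_general s u v hu hv
end
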